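/- arXiv:1605.09607 — 6 statements merged into one kernel-verified Lean document; each statement's English description precedes it below -/
import Mathlib

section
/- For the measure μ(x,y) = exp(α·x(x-1)/2 + α·y(y-1)/2 + β·x·y) on Z₊², the total mass ∑_{(x,y)∈Z₊²} μ(x,y) is finite if and only if α < 0 and α + β < 0. -/
/-!
Bounding `β x y ≤ max β 0 · (x² + y²) / 2` decouples the coordinates, so the mass is dominated by
the square of the one-dimensional Gaussian sum `∑ exp(((α + max β 0) / 2) n² - (α / 2) n)`, finite
when `α + max β 0 < 0`. Conversely, if `α ≥ 0` the terms at `(n, 0)` are `≥ 1`, and if `α < 0 ≤ α + β`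
the exponent at `(n, n)`, namely `(α + β) n² - α n`, is nonnegative; either way the terms do not
tend to zero.
-/

open Real

open Filter in
theorem Real.summable_exp_quadratic {a : ℝ} (ha : a < 0) (c : ℝ) :
    Summable fun n : ℕ => exp (a * n ^ 2 + c * n) := by
  refine summable_of_ratio_test_tendsto_lt_one zero_lt_one
    (Eventually.of_forall fun n => (exp_pos _).ne') ?_
  have hratio : ∀ n : ℕ, ‖exp (a * ↑(n + 1) ^ 2 + c * ↑(n + 1))‖ / ‖exp (a * n ^ 2 + c * n)‖
      = exp (2 * a * n + (a + c)) := fun n => by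
    rw [norm_of_nonneg (exp_nonneg _), norm_of_nonneg (exp_nonneg _), ← exp_sub]
    push_cast
    ring_nf
  simp only [hratio]
  exact tendsto_exp_atBot.comp <| tendsto_atBot_add_const_right _ _ <|
    tendsto_natCast_atTop_atTop.const_mul_atTop_of_neg (by linarith)

theorem not_summable_of_one_le_comp {ι : Type*} {f : ι → ℝ} {g : ℕ → ι}
    (hg : Function.Injective g) (h : ∀ n, 1 ≤ f (g n)) : ¬Summable f := fun hf =>
  one_pos.not_ge <| ge_of_tendsto' (hf.comp_injective hg).tendsto_atTop_zero h

namespace BirthDeathChain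

noncomputable def logInvariantMeasure (α β x y : ℝ) : ℝ :=
  α * (x * (x - 1) + y * (y - 1)) / 2 + β * x * y

variable {α β : ℝ}

theorem logInvariantMeasure_le_add (x y : ℝ) (hx : 0 ≤ x) (hy : 0 ≤ y) :
    logInvariantMeasure α β x y ≤ ((α + max β 0) / 2 * x ^ 2 + (-α / 2) * x)
      + ((α + max β 0) / 2 * y ^ 2 + (-α / 2) * y) := by
  have hcross : β * x * y ≤ max β 0 / 2 * (x ^ 2 + y ^ 2) := by
    have hxy : x * y ≤ (x ^ 2 + y ^ 2) / 2 := by nlinarith [sq_nonneg (x - y)]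
    calc β * x * y ≤ max β 0 * (x * y) := by
          rw [mul_assoc]; exact mul_le_mul_of_nonneg_right (le_max_left _ _) (mul_nonneg hx hy)
      _ ≤ max β 0 * ((x ^ 2 + y ^ 2) / 2) := mul_le_mul_of_nonneg_left hxy (le_max_right _ _)
      _ = _ := by ring
  unfold logInvariantMeasure
  linarith

theorem summable_exp_logInvariantMeasure (hα : α < 0) (hαβ : α + β < 0) :
    Summable fun p : ℕ × ℕ => exp (logInvariantMeasure α β p.1 p.2) := by
  have ha : (α + max β 0) / 2 < 0 := by
    have : max β 0 < -α := max_lt (by linarith) (by linarith)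
    linarith
  have hf := summable_exp_quadratic ha (-α / 2)
  refine .of_nonneg_of_le (fun _ => (exp_pos _).le) (fun p => ?_)
    (hf.mul_of_nonneg hf (fun _ => (exp_pos _).le) (fun _ => (exp_pos _).le))
  rw [← exp_add, exp_le_exp]
  exact logInvariantMeasure_le_add _ _ p.1.cast_nonneg p.2.cast_nonneg

theorem neg_of_summable_exp_logInvariantMeasure
    (h : Summable fun p : ℕ × ℕ => exp (logInvariantMeasure α β p.1 p.2)) : α < 0 := by
  by_contra! hα
  refine not_summable_of_one_le_comp (g := fun n => (n + 1, 0)) ?_ (fun n => ?_) h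
  · intro m n hmn
    simpa using hmn
  · show 1 ≤ exp (logInvariantMeasure α β (n + 1 : ℕ) (0 : ℕ))
    rw [one_le_exp_iff]
    calc (0 : ℝ) ≤ α * ((n + 1) * n) / 2 :=
          div_nonneg (mul_nonneg hα (by positivity)) zero_le_two
      _ = logInvariantMeasure α β (n + 1 : ℕ) (0 : ℕ) := by
          unfold logInvariantMeasure; push_cast; ring

theorem add_neg_of_summable_exp_logInvariantMeasure (hα : α < 0)
    (h : Summable fun p : ℕ × ℕ => exp (logInvariantMeasure α β p.1 p.2)) : α + β < 0 := by
  by_contra! hαβ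
  refine not_summable_of_one_le_comp (g := fun n => (n, n)) ?_ (fun n => ?_) h
  · intro m n hmn
    simpa using hmn
  · have hn : (0 : ℝ) ≤ n := n.cast_nonneg
    rw [one_le_exp_iff]
    calc (0 : ℝ) ≤ (α + β) * n ^ 2 + (-α) * n :=
          add_nonneg (mul_nonneg hαβ (sq_nonneg _)) (mul_nonneg (by linarith) hn)
      _ = logInvariantMeasure α β n n := by unfold logInvariantMeasure; ring

end BirthDeathChain

open BirthDeathChain in
/-- The invariant measure `μ(x,y) = exp(α·x(x-1)/2 + α·y(y-1)/2 + β·x·y)` on `ℤ₊²`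
has finite total mass iff `α < 0` and `α + β < 0`. -/
theorem stmt_0 (α β : ℝ) :
    Summable (fun p : ℕ × ℕ =>
      Real.exp (α * ((p.1 : ℝ) * ((p.1 : ℝ) - 1) + (p.2 : ℝ) * ((p.2 : ℝ) - 1)) / 2
        + β * (p.1 : ℝ) * (p.2 : ℝ))) ↔ α < 0 ∧ α + β < 0 := by
  change Summable (fun p : ℕ × ℕ => exp (logInvariantMeasure α β p.1 p.2)) ↔ _
  refine ⟨fun h => ?_, fun ⟨hα, hαβ⟩ => summable_exp_logInvariantMeasure hα hαβ⟩
  have hα := neg_of_summable_exp_logInvariantMeasure h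
  exact ⟨hα, add_neg_of_summable_exp_logInvariantMeasure hα h⟩
end

section
/- If F : ℝ₊ → (0,∞) is non-increasing with F(x) → 0 as x → ∞, and G : ℝ₊ → (0,∞) is non-decreasing with F(x)G(x) → ∞ as x → ∞, then for every ε ∈ (0,1) there exists a > 0 such that for all (x,y) ∈ Z₊² with x + y ≥ a and 0 ≤ y ≤ x, one has (F(x)G(y) + F(y)G(x))(1−ε) − 2(1+ε) ≥ 0. -/
/-! Since `y ≤ x` and `F` is non-increasing, `F(y)G(x) ≥ F(x)G(x)`, while `F(x)G(y) > 0`; so the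
bracket exceeds `F(x)G(x)`, and `x ≥ (x + y)/2` makes `F(x)G(x)` as large as we please. -/

open Filter

theorem mul_lt_add_mul_of_antitoneOn {α : Type*} [Preorder α] {s : Set α} {F G : α → ℝ}
    (hFanti : AntitoneOn F s) {x y : α} (hx : x ∈ s) (hy : y ∈ s) (hyx : y ≤ x)
    (hFx : 0 < F x) (hGx : 0 ≤ G x) (hGy : 0 < G y) :
    F x * G x < F x * G y + F y * G x := by
  have hcross : F x * G x ≤ F y * G x := mul_le_mul_of_nonneg_right (hFanti hy hx hyx) hGx
  have hpos : 0 < F x * G y := mul_pos hFx hGy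
  linarith

theorem stmt_2_general (F G : ℝ → ℝ)
    (hFpos : ∀ x : ℝ, 0 ≤ x → 0 < F x)
    (hGpos : ∀ x : ℝ, 0 ≤ x → 0 < G x)
    (hFanti : AntitoneOn F (Set.Ici (0 : ℝ)))
    (hFG : Tendsto (fun x => F x * G x) atTop atTop) :
    ∀ ε : ℝ, 0 < ε → ε < 1 → ∃ a : ℝ, 0 < a ∧
      ∀ x y : ℕ, a ≤ (x : ℝ) + (y : ℝ) → y ≤ x →
        0 ≤ (F (x : ℝ) * G (y : ℝ) + F (y : ℝ) * G (x : ℝ)) * (1 - ε) - 2 * (1 + ε) := by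
  intro ε hε hε1
  have h1ε : 0 < 1 - ε := by linarith
  obtain ⟨M, hM⟩ := eventually_atTop.mp (hFG.eventually_ge_atTop (2 * (1 + ε) / (1 - ε)))
  refine ⟨max (2 * M) 1, lt_max_of_lt_right one_pos, fun x y hxy hyx => ?_⟩
  have hy : (0 : ℝ) ≤ y := y.cast_nonneg
  have hyx' : (y : ℝ) ≤ x := Nat.cast_le.mpr hyx
  have hx : (0 : ℝ) ≤ x := hy.trans hyx'
  have hxM : M ≤ x := by linarith [le_max_left (2 * M) 1]
  have hbound : 2 * (1 + ε) / (1 - ε) ≤ F x * G y + F y * G x :=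
    (hM x hxM).trans (mul_lt_add_mul_of_antitoneOn hFanti hx hy hyx' (hFpos x hx) (hGpos x hx).le
      (hGpos y hy)).le
  rw [div_le_iff₀ h1ε] at hbound
  linarith

/-- Drift inequality for the Lyapunov function `f(x,y) = x + y` in Part 1)b) of Theorem 1:
if `F` is positive non-increasing with limit `0` and `G` is positive non-decreasing with
`F·G → ∞`, then for every `ε ∈ (0,1)` there is `a > 0` such that for all `(x,y) ∈ ℤ₊²`
with `x + y ≥ a` and `y ≤ x`, `(F(x)G(y) + F(y)G(x))(1-ε) - 2(1+ε) ≥ 0`. -/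
theorem stmt_2 (F G : ℝ → ℝ)
    (hFpos : ∀ x : ℝ, 0 ≤ x → 0 < F x)
    (hGpos : ∀ x : ℝ, 0 ≤ x → 0 < G x)
    (hFanti : AntitoneOn F (Set.Ici (0 : ℝ)))
    (hFlim : Tendsto F atTop (nhds 0))
    (hGmono : MonotoneOn G (Set.Ici (0 : ℝ)))
    (hFG : Tendsto (fun x => F x * G x) atTop atTop) :
    ∀ ε : ℝ, 0 < ε → ε < 1 → ∃ a : ℝ, 0 < a ∧
      ∀ x y : ℕ, a ≤ (x : ℝ) + (y : ℝ) → y ≤ x →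
        0 ≤ (F (x : ℝ) * G (y : ℝ) + F (y : ℝ) * G (x : ℝ)) * (1 - ε) - 2 * (1 + ε) :=
  stmt_2_general F G hFpos hGpos hFanti hFG
end

section
/- Let F be positive non-increasing and G positive non-decreasing on ℝ₊. For the discrete-time chain ζ(t) on Z₊² which from state (x,y) jumps to (x+1,y), (x,y+1), (x−1,y) (if x>0), (x,y−1) (if y>0) with probabilities proportional to F(x)G(y), F(y)G(x), 1, 1 respectively, the function f(x,y) = |x − y| satisfies E[f(ζ(t+1)) − f(ζ(t)) | ζ(t) = (x,y)] ≤ 0 whenever x ≠ y. -/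
/-!
Off the diagonal, say at `y < x`, the four moves change `|x - y|` by `+1`, `-1`, `-1`, `+1` (the
last only when `y > 0`), so the drift numerator is `F(x)G(y) - F(y)G(x) - 1 + 1_{y>0}`. Since `F` is
non-increasing and `G` non-decreasing, both positive, `F(x)G(y) ≤ F(y)G(x)`; and the numerator is
symmetric under swapping the coordinates together with the two weights.
-/

/-- Numerator of the one-step drift of `|x - y|` at `(x, y)`, with weight `a` on `(x+1, y)`
and `b` on `(x, y+1)`. -/
def absDiffDriftNum (a b : ℝ) (x y : ℕ) : ℝ :=
  (|(x : ℝ) + 1 - (y : ℝ)| - |(x : ℝ) - (y : ℝ)|) * a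
    + (|(x : ℝ) - ((y : ℝ) + 1)| - |(x : ℝ) - (y : ℝ)|) * b
    + (if 0 < x then |(x : ℝ) - 1 - (y : ℝ)| - |(x : ℝ) - (y : ℝ)| else 0)
    + (if 0 < y then |(x : ℝ) - ((y : ℝ) - 1)| - |(x : ℝ) - (y : ℝ)| else 0)

lemma absDiffDriftNum_comm (a b : ℝ) (x y : ℕ) :
    absDiffDriftNum a b x y = absDiffDriftNum b a y x := by
  unfold absDiffDriftNum
  rw [abs_sub_comm (x : ℝ) (y : ℝ), abs_sub_comm (x : ℝ) ((y : ℝ) + 1),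
    abs_sub_comm ((x : ℝ) + 1) (y : ℝ), abs_sub_comm ((x : ℝ) - 1) (y : ℝ),
    abs_sub_comm (x : ℝ) ((y : ℝ) - 1)]
  ring

lemma absDiffDriftNum_of_lt (a b : ℝ) {x y : ℕ} (h : y < x) :
    absDiffDriftNum a b x y = a - b - 1 + if 0 < y then 1 else 0 := by
  have hxy : (y : ℝ) + 1 ≤ x := by exact_mod_cast h
  have hx : 0 < x := by omega
  unfold absDiffDriftNum
  rw [if_pos hx, abs_of_nonneg (by linarith), abs_of_nonneg (by linarith),
    abs_of_nonneg (by linarith), abs_of_nonneg (by linarith)]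
  split_ifs with hy
  · rw [abs_of_nonneg (by linarith)]
    ring
  · ring

lemma absDiffDriftNum_nonpos_of_lt {a b : ℝ} (hab : a ≤ b) {x y : ℕ} (h : y < x) :
    absDiffDriftNum a b x y ≤ 0 := by
  rw [absDiffDriftNum_of_lt a b h]
  split_ifs <;> linarith

lemma mul_le_mul_of_antitoneOn_of_monotoneOn {F G : ℝ → ℝ} {s : Set ℝ}
    (hF : AntitoneOn F s) (hG : MonotoneOn G s) {u v : ℝ} (hu : u ∈ s) (hv : v ∈ s)
    (huv : u ≤ v) (hFu : 0 ≤ F u) (hGu : 0 ≤ G u) :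
    F v * G u ≤ F u * G v :=
  mul_le_mul (hF hu hv huv) (hG hu hv huv) hGu hFu

/-- For the embedded discrete-time chain which from `(x,y)` jumps to `(x+1,y)`, `(x,y+1)`,
`(x−1,y)` (if `x > 0`), `(x,y−1)` (if `y > 0`) with probabilities proportional to
`F(x)G(y)`, `F(y)G(x)`, `1`, `1`, the one-step mean drift of `f(x,y) = |x − y|` is `≤ 0`
off the diagonal, when `F` is positive non-increasing and `G` positive non-decreasing. -/
theorem stmt_4 (F G : ℝ → ℝ)
    (hFpos : ∀ x : ℝ, 0 ≤ x → 0 < F x)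
    (hGpos : ∀ x : ℝ, 0 ≤ x → 0 < G x)
    (hFanti : AntitoneOn F (Set.Ici (0 : ℝ)))
    (hGmono : MonotoneOn G (Set.Ici (0 : ℝ))) :
    ∀ x y : ℕ, x ≠ y →
      ((|(x : ℝ) + 1 - (y : ℝ)| - |(x : ℝ) - (y : ℝ)|) * (F (x : ℝ) * G (y : ℝ))
        + (|(x : ℝ) - ((y : ℝ) + 1)| - |(x : ℝ) - (y : ℝ)|) * (F (y : ℝ) * G (x : ℝ))
        + (if 0 < x then |(x : ℝ) - 1 - (y : ℝ)| - |(x : ℝ) - (y : ℝ)| else 0)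
        + (if 0 < y then |(x : ℝ) - ((y : ℝ) - 1)| - |(x : ℝ) - (y : ℝ)| else 0))
      / (F (x : ℝ) * G (y : ℝ) + F (y : ℝ) * G (x : ℝ)
          + (if 0 < x then 1 else 0) + (if 0 < y then 1 else 0)) ≤ 0 := by
  intro x y hxy
  have hmem (n : ℕ) : (n : ℝ) ∈ Set.Ici (0 : ℝ) := Set.mem_Ici.2 n.cast_nonneg
  have hweight (m n : ℕ) : 0 < F m * G n := mul_pos (hFpos _ (hmem m)) (hGpos _ (hmem n))
  have hcross {m n : ℕ} (h : m < n) : F n * G m ≤ F m * G n :=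
    mul_le_mul_of_antitoneOn_of_monotoneOn hFanti hGmono (hmem m) (hmem n)
      (by exact_mod_cast h.le) (hFpos _ (hmem m)).le (hGpos _ (hmem m)).le
  refine div_nonpos_of_nonpos_of_nonneg ?_ ?_
  · change absDiffDriftNum (F x * G y) (F y * G x) x y ≤ 0
    rcases lt_or_gt_of_ne hxy with h | h
    · rw [absDiffDriftNum_comm]
      exact absDiffDriftNum_nonpos_of_lt (hcross h) h
    · exact absDiffDriftNum_nonpos_of_lt (hcross h) h
  · have := hweight x y
    have := hweight y x
    split_ifs <;> linarith
end

section
/- Let λ₁ ∈ (0,1], λ₂ > 0 with λ₁ + λ₂ > 1, and choose ν with 0 < ν < λ₁ + λ₂ − 1. Define f₀(x,0) = x^{−ν} for x > 0. Then there exists N such that for all integers x ≥ N: ((x+1)^{−ν} − x^{−ν})·(x+1)^{λ₁} + ((x−1)^{−ν} − x^{−ν}) + (1 − x^{−ν})·(x+1)^{−λ₂} ≤ 0. -/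
/-!
By the mean value theorem the rightward increment contributes at most `-ν (x+1)^(λ₁-ν-1)`, the
leftward one `O(x^(-ν-1))` and the upward one at most `(x+1)^(-λ₂)`. Factoring out
`(x+1)^(λ₁-ν-1)` leaves `-ν + O(x^(-λ₁)) + (x+1)^(-(λ₁+λ₂-1-ν))`, which is negative for large `x`
because `λ₁ > 0` and `ν < λ₁ + λ₂ - 1`.
-/

open Real Filter Set

section RpowIncrements

variable {p a b : ℝ}

lemma continuousOn_rpow_const_Icc (ha : 0 < a) : ContinuousOn (fun t : ℝ => t ^ p) (Icc a b) :=
  continuousOn_id.rpow_const fun _ ht => Or.inl (ha.trans_le ht.1).ne'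

lemma differentiableOn_rpow_const_Ioo (ha : 0 < a) :
    DifferentiableOn ℝ (fun t : ℝ => t ^ p) (interior (Icc a b)) := by
  rw [interior_Icc]
  exact fun t ht => (differentiableAt_rpow_const_of_ne p (ha.trans ht.1).ne').differentiableWithinAt

lemma rpow_sub_rpow_le_of_nonpos (hp : p ≤ 0) (ha : 0 < a) (hab : a ≤ b) :
    b ^ p - a ^ p ≤ p * b ^ (p - 1) * (b - a) := by
  refine (convex_Icc a b).image_sub_le_mul_sub_of_deriv_le (continuousOn_rpow_const_Icc ha)
    (differentiableOn_rpow_const_Ioo ha) (fun t ht => ?_) a (left_mem_Icc.2 hab) b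
    (right_mem_Icc.2 hab) hab
  rw [interior_Icc] at ht
  rw [Real.deriv_rpow_const]
  exact mul_le_mul_of_nonpos_left (rpow_le_rpow_of_nonpos (ha.trans ht.1) ht.2.le (by linarith)) hp

lemma mul_rpow_le_rpow_sub_rpow_of_nonpos (hp : p ≤ 0) (ha : 0 < a) (hab : a ≤ b) :
    p * a ^ (p - 1) * (b - a) ≤ b ^ p - a ^ p := by
  refine (convex_Icc a b).mul_sub_le_image_sub_of_le_deriv (continuousOn_rpow_const_Icc ha)
    (differentiableOn_rpow_const_Ioo ha) (fun t ht => ?_) a (left_mem_Icc.2 hab) b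
    (right_mem_Icc.2 hab) hab
  rw [interior_Icc] at ht
  rw [Real.deriv_rpow_const]
  exact mul_le_mul_of_nonpos_left (rpow_le_rpow_of_nonpos ha ht.1.le (by linarith)) hp

end RpowIncrements

/-- `L f₀ (X, 0)`, where `f₀ = x ^ (-ν)` on the horizontal axis and `f₀ = 1` off it. -/
noncomputable def lyapunovDrift (lam1 lam2 ν X : ℝ) : ℝ :=
  ((X + 1) ^ (-ν) - X ^ (-ν)) * (X + 1) ^ lam1 + ((X - 1) ^ (-ν) - X ^ (-ν))
    + (1 - X ^ (-ν)) * (X + 1) ^ (-lam2)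

section Drift

variable {lam1 lam2 ν X : ℝ}

lemma sub_one_rpow_le_three_rpow_mul_add_one_rpow {q : ℝ} (hq : q ≤ 0) (hX : 2 ≤ X) :
    (X - 1) ^ q ≤ 3 ^ (-q) * (X + 1) ^ q := by
  have h3 : (X + 1) ^ q = 3 ^ q * ((X + 1) / 3) ^ q := by
    rw [← mul_rpow (by norm_num) (by linarith), mul_div_cancel₀ _ (by norm_num)]
  rw [h3, ← mul_assoc, ← rpow_add (by norm_num), neg_add_cancel, rpow_zero, one_mul]
  exact rpow_le_rpow_of_nonpos (by linarith) (by linarith) hq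

lemma lyapunovDrift_le (hν : 0 ≤ ν) (hX : 2 ≤ X) :
    lyapunovDrift lam1 lam2 ν X ≤ (X + 1) ^ (lam1 - ν - 1) *
      (ν * 3 ^ (ν + 1) * (X + 1) ^ (-lam1) + (X + 1) ^ (-(lam1 + lam2 - 1 - ν)) - ν) := by
  have hY : 0 < X + 1 := by linarith
  have hsplit (s : ℝ) : (X + 1) ^ (s + (lam1 - ν - 1)) = (X + 1) ^ s * (X + 1) ^ (lam1 - ν - 1) :=
    rpow_add hY _ _
  have hright : ((X + 1) ^ (-ν) - X ^ (-ν)) * (X + 1) ^ lam1 ≤ -ν * (X + 1) ^ (lam1 - ν - 1) := by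
    have h := rpow_sub_rpow_le_of_nonpos (p := -ν) (by linarith) (by linarith)
      (by linarith : X ≤ X + 1)
    calc ((X + 1) ^ (-ν) - X ^ (-ν)) * (X + 1) ^ lam1
        ≤ -ν * (X + 1) ^ (-ν - 1) * (X + 1 - X) * (X + 1) ^ lam1 :=
          mul_le_mul_of_nonneg_right h (rpow_nonneg hY.le _)
      _ = -ν * (X + 1) ^ (lam1 - ν - 1) := by
          rw [show lam1 - ν - 1 = -ν - 1 + lam1 by ring, rpow_add hY]; ring
  have hleft : (X - 1) ^ (-ν) - X ^ (-ν) ≤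
      ν * 3 ^ (ν + 1) * (X + 1) ^ (-lam1) * (X + 1) ^ (lam1 - ν - 1) := by
    have h := mul_rpow_le_rpow_sub_rpow_of_nonpos (p := -ν) (by linarith) (by linarith)
      (by linarith : X - 1 ≤ X)
    calc (X - 1) ^ (-ν) - X ^ (-ν) ≤ ν * (X - 1) ^ (-ν - 1) := by linarith
      _ ≤ ν * (3 ^ (-(-ν - 1)) * (X + 1) ^ (-ν - 1)) :=
          mul_le_mul_of_nonneg_left
            (sub_one_rpow_le_three_rpow_mul_add_one_rpow (by linarith) hX) hν
      _ = _ := by rw [← mul_assoc, mul_assoc _ ((X + 1) ^ (-lam1)), ← hsplit]; ring_nf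
  have hup : (1 - X ^ (-ν)) * (X + 1) ^ (-lam2) ≤
      (X + 1) ^ (-(lam1 + lam2 - 1 - ν)) * (X + 1) ^ (lam1 - ν - 1) := by
    calc (1 - X ^ (-ν)) * (X + 1) ^ (-lam2) ≤ 1 * (X + 1) ^ (-lam2) :=
          mul_le_mul_of_nonneg_right (by linarith [rpow_nonneg (by linarith : 0 ≤ X) (-ν)])
            (rpow_nonneg hY.le _)
      _ = _ := by rw [← hsplit]; ring_nf
  calc lyapunovDrift lam1 lam2 ν X
      ≤ -ν * (X + 1) ^ (lam1 - ν - 1)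
        + ν * 3 ^ (ν + 1) * (X + 1) ^ (-lam1) * (X + 1) ^ (lam1 - ν - 1)
        + (X + 1) ^ (-(lam1 + lam2 - 1 - ν)) * (X + 1) ^ (lam1 - ν - 1) := by
        unfold lyapunovDrift; linarith
    _ = _ := by ring

lemma eventually_lyapunovDrift_nonpos (h1 : 0 < lam1) (hν0 : 0 < ν) (hν : ν < lam1 + lam2 - 1) :
    ∀ᶠ X in atTop, lyapunovDrift lam1 lam2 ν X ≤ 0 := by
  have hlim : Tendsto (fun X : ℝ => ν * 3 ^ (ν + 1) * (X + 1) ^ (-lam1)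
      + (X + 1) ^ (-(lam1 + lam2 - 1 - ν))) atTop (nhds 0) := by
    have h := ((tendsto_rpow_neg_atTop h1).const_mul (ν * 3 ^ (ν + 1))).add
      (tendsto_rpow_neg_atTop (by linarith : 0 < lam1 + lam2 - 1 - ν))
    rw [mul_zero, add_zero] at h
    exact h.comp (tendsto_atTop_add_const_right atTop 1 tendsto_id)
  filter_upwards [hlim.eventually_le_const hν0, eventually_ge_atTop 2] with X hsmall hX
  exact (lyapunovDrift_le hν0.le hX).trans
    (mul_nonpos_of_nonneg_of_nonpos (rpow_nonneg (by linarith) _) (by linarith))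

end Drift

theorem stmt_11_general (lam1 lam2 ν : ℝ) (h1 : 0 < lam1)
    (hν0 : 0 < ν) (hν : ν < lam1 + lam2 - 1) :
    ∃ N : ℕ, ∀ x : ℕ, N ≤ x →
      (((x : ℝ) + 1) ^ (-ν) - (x : ℝ) ^ (-ν)) * ((x : ℝ) + 1) ^ lam1
        + (((x : ℝ) - 1) ^ (-ν) - (x : ℝ) ^ (-ν))
        + (1 - (x : ℝ) ^ (-ν)) * ((x : ℝ) + 1) ^ (-lam2) ≤ 0 :=
  eventually_atTop.mp
    (tendsto_natCast_atTop_atTop.eventually (eventually_lyapunovDrift_nonpos h1 hν0 hν))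

/-- Drift inequality `Lf₀(x,0) ≤ 0` for the Lyapunov function `f₀(x,0) = x^{−ν}` in Lemma 1
(case `k = 0`): for `λ₁ ∈ (0,1]`, `λ₂ > 0` with `λ₁ + λ₂ > 1` and `0 < ν < λ₁ + λ₂ − 1`,
the stated combination is `≤ 0` for all large enough integers `x`. -/
theorem stmt_11 (lam1 lam2 ν : ℝ) (h1 : 0 < lam1) (h1' : lam1 ≤ 1) (h2 : 0 < lam2)
    (hsum : 1 < lam1 + lam2) (hν0 : 0 < ν) (hν : ν < lam1 + lam2 - 1) :
    ∃ N : ℕ, ∀ x : ℕ, N ≤ x →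
      (((x : ℝ) + 1) ^ (-ν) - (x : ℝ) ^ (-ν)) * ((x : ℝ) + 1) ^ lam1
        + (((x : ℝ) - 1) ^ (-ν) - (x : ℝ) ^ (-ν))
        + (1 - (x : ℝ) ^ (-ν)) * ((x : ℝ) + 1) ^ (-lam2) ≤ 0 :=
  stmt_11_general lam1 lam2 ν h1 hν0 hν
end

section
/- Let λ₁ ∈ (0,1), λ₂ > 0 with λ₁ + λ₂ ≤ 1, and 0 < ν₁ < 1. Define g₁(x,0) = x^{ν₁}. Then there exists N such that for all integers x ≥ N: ((x+1)^{ν₁} − x^{ν₁})·(x+1)^{λ₁} + ((x−1)^{ν₁} − x^{ν₁}) + (1 − x^{ν₁})·(x+1)^{−λ₂} ≤ 0. -/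
/-!
Write `t = x ^ ν₁`. By concavity, `(x+1)^ν₁ - x^ν₁ ≤ ν₁ x^(ν₁-1) = ν₁ t / x`, and since
`(x+1)^λ₁ ≤ (x+1) · (x+1)^(-λ₂)` when `λ₁ + λ₂ ≤ 1`, the first term is at most
`ν₁ t (1 + 1/x) (x+1)^(-λ₂) ≤ (ν₁ t + ν₁) (x+1)^(-λ₂)`. The middle term is nonpositive, and the
last one equals `-(t - 1)(x+1)^(-λ₂)`. So everything is `≤ 0` as soon as
`ν₁ + 1 ≤ (1 - ν₁) t`, which holds for large `x` because `t → ∞`.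
-/

open Real Filter

theorem rpow_add_le_rpow_add_mul_rpow_sub_one {y h ν : ℝ} (hy : 0 < y) (hyh : 0 ≤ y + h)
    (hν0 : 0 ≤ ν) (hν1 : ν ≤ 1) : (y + h) ^ ν ≤ y ^ ν + ν * y ^ (ν - 1) * h := by
  have hs : -1 ≤ h / y := by rw [le_div_iff₀ hy]; linarith
  calc (y + h) ^ ν = y ^ ν * (1 + h / y) ^ ν := by
        rw [← mul_rpow hy.le (by linarith), mul_one_add, mul_div_cancel₀ h hy.ne']
    _ ≤ y ^ ν * (1 + ν * (h / y)) := by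
        gcongr
        exact rpow_one_add_le_one_add_mul_self hs hν0 hν1
    _ = y ^ ν + ν * y ^ (ν - 1) * h := by
        rw [rpow_sub_one hy.ne']
        ring

theorem rpow_add_one_sub_rpow_mul_le {y ν : ℝ} (hy : 1 ≤ y) (hν0 : 0 ≤ ν) (hν1 : ν ≤ 1)
    (hbig : ν + 1 ≤ (1 - ν) * y ^ ν) : ((y + 1) ^ ν - y ^ ν) * (y + 1) ≤ y ^ ν - 1 := by
  have hy0 : 0 < y := by linarith
  have htangent := rpow_add_le_rpow_add_mul_rpow_sub_one hy0 (by linarith : 0 ≤ y + 1) hν0 hν1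
  have hsmall : y ^ (ν - 1) ≤ 1 := rpow_le_one_of_one_le_of_nonpos hy (by linarith)
  have hmul : y ^ (ν - 1) * y = y ^ ν := by
    rw [rpow_sub_one hy0.ne', div_mul_cancel₀ _ hy0.ne']
  calc ((y + 1) ^ ν - y ^ ν) * (y + 1) ≤ ν * y ^ (ν - 1) * (y + 1) := by
        gcongr
        linarith
    _ = ν * y ^ ν + ν * y ^ (ν - 1) := by rw [← hmul]; ring
    _ ≤ ν * y ^ ν + ν := by nlinarith
    _ ≤ y ^ ν - 1 := by linarith

theorem rpow_le_mul_rpow_neg {z a b : ℝ} (hz : 1 ≤ z) (hab : a + b ≤ 1) :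
    z ^ a ≤ z * z ^ (-b) := by
  have hz0 : 0 < z := by linarith
  calc z ^ a ≤ z ^ (1 - b) := rpow_le_rpow_of_exponent_le hz (by linarith)
    _ = z * z ^ (-b) := by rw [sub_eq_add_neg, rpow_add hz0, rpow_one]

/-- `L g₁ (y, 0)` for the chain with `F y = (y + 1) ^ λ₁`, `G y = (y + 1) ^ (-λ₂)` and
`g₁ (y, 0) = y ^ ν`, `g₁ = 1` off the axis. -/
noncomputable def drift (lam1 lam2 ν y : ℝ) : ℝ :=
  ((y + 1) ^ ν - y ^ ν) * (y + 1) ^ lam1 + ((y - 1) ^ ν - y ^ ν) + (1 - y ^ ν) * (y + 1) ^ (-lam2)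

theorem drift_nonpos {lam1 lam2 ν y : ℝ} (hsum : lam1 + lam2 ≤ 1) (hν0 : 0 ≤ ν) (hν1 : ν ≤ 1)
    (hy : 1 ≤ y) (hbig : ν + 1 ≤ (1 - ν) * y ^ ν) : drift lam1 lam2 ν y ≤ 0 := by
  have hincr : 0 ≤ (y + 1) ^ ν - y ^ ν := by
    rw [sub_nonneg]
    exact rpow_le_rpow (by linarith) (by linarith) hν0
  have hdecr : (y - 1) ^ ν ≤ y ^ ν := rpow_le_rpow (by linarith) (by linarith) hν0
  have hfirst : ((y + 1) ^ ν - y ^ ν) * (y + 1) ^ lam1 ≤ (y ^ ν - 1) * (y + 1) ^ (-lam2) :=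
    calc ((y + 1) ^ ν - y ^ ν) * (y + 1) ^ lam1
        ≤ ((y + 1) ^ ν - y ^ ν) * ((y + 1) * (y + 1) ^ (-lam2)) := by
          gcongr
          exact rpow_le_mul_rpow_neg (by linarith) hsum
      _ = ((y + 1) ^ ν - y ^ ν) * (y + 1) * (y + 1) ^ (-lam2) := by ring
      _ ≤ (y ^ ν - 1) * (y + 1) ^ (-lam2) := by
          gcongr
          exact rpow_add_one_sub_rpow_mul_le hy hν0 hν1 hbig
  unfold drift
  linarith

theorem eventually_drift_nonpos (lam1 lam2 : ℝ) {ν : ℝ} (hsum : lam1 + lam2 ≤ 1)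
    (hν0 : 0 < ν) (hν1 : ν < 1) : ∀ᶠ x : ℕ in atTop, drift lam1 lam2 ν x ≤ 0 := by
  have hpow : Tendsto (fun x : ℕ => (x : ℝ) ^ ν) atTop atTop :=
    (tendsto_rpow_atTop hν0).comp tendsto_natCast_atTop_atTop
  filter_upwards [hpow.eventually_ge_atTop ((ν + 1) / (1 - ν)), eventually_ge_atTop 1]
    with x hbig hx
  rw [div_le_iff₀ (by linarith)] at hbig
  exact drift_nonpos hsum hν0.le hν1.le (by exact_mod_cast hx) (by linarith)

theorem stmt_12_general (lam1 lam2 ν₁ : ℝ)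
    (hsum : lam1 + lam2 ≤ 1) (hν0 : 0 < ν₁) (hν1 : ν₁ < 1) :
    ∃ N : ℕ, ∀ x : ℕ, N ≤ x →
      (((x : ℝ) + 1) ^ ν₁ - (x : ℝ) ^ ν₁) * ((x : ℝ) + 1) ^ lam1
        + (((x : ℝ) - 1) ^ ν₁ - (x : ℝ) ^ ν₁)
        + (1 - (x : ℝ) ^ ν₁) * ((x : ℝ) + 1) ^ (-lam2) ≤ 0 :=
  eventually_atTop.mp (eventually_drift_nonpos lam1 lam2 hsum hν0 hν1)

/-- Drift inequality `Lg₁(x,0) ≤ 0` in Lemma 2 (case `k = 1`): for `λ₁ ∈ (0,1)`, `λ₂ > 0`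
with `λ₁ + λ₂ ≤ 1` and `0 < ν₁ < 1`, the stated combination is `≤ 0` for all large enough
integers `x`. -/
theorem stmt_12 (lam1 lam2 ν₁ : ℝ) (h1 : 0 < lam1) (h1' : lam1 < 1) (h2 : 0 < lam2)
    (hsum : lam1 + lam2 ≤ 1) (hν0 : 0 < ν₁) (hν1 : ν₁ < 1) :
    ∃ N : ℕ, ∀ x : ℕ, N ≤ x →
      (((x : ℝ) + 1) ^ ν₁ - (x : ℝ) ^ ν₁) * ((x : ℝ) + 1) ^ lam1
        + (((x : ℝ) - 1) ^ ν₁ - (x : ℝ) ^ ν₁)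
        + (1 - (x : ℝ) ^ ν₁) * ((x : ℝ) + 1) ^ (-lam2) ≤ 0 :=
  stmt_12_general lam1 lam2 ν₁ hsum hν0 hν1
end

section
/- Let λ₁ > 1 and λ₂ > 0, and fix an integer m ≥ 0 and ν with 0 < ν < λ₁ − 1. Then there exist ε > 0 and N such that for all integers x ≥ N: ((x+1)^{−ν} − x^{−ν})·(x+1)^{λ₁}/(m+1)^{λ₂} + ((x−1)^{−ν} − x^{−ν}) + (1 − x^{−ν})·((m+1)^{λ₁}/(x+1)^{λ₂} + 1) ≤ −ε. -/
/-!
The first term is the only one that grows: by the mean value theorem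
`(x+1)^(-ν) - x^(-ν) ≤ -ν (x+1)^(-ν-1)`, so it is at most `-ν (x+1)^(λ₁-ν-1) / (m+1)^λ₂`,
which tends to `-∞` because `ν < λ₁ - 1`. The other two terms stay bounded, by `1` and by
`(m+1)^λ₁ + 1` respectively, so the whole expression is eventually below `-1`.
-/

open Real Filter

lemma rpow_neg_add_one_sub_rpow_neg_le {ν x : ℝ} (hν : 0 ≤ ν) (hx : 0 < x) :
    (x + 1) ^ (-ν) - x ^ (-ν) ≤ -ν * (x + 1) ^ (-ν - 1) := by
  obtain ⟨c, ⟨hxc, hc1⟩, hslope⟩ := exists_hasDerivAt_eq_slope (fun t => t ^ (-ν))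
    (fun t => -ν * t ^ (-ν - 1)) (lt_add_one x)
    (continuousOn_id.rpow_const fun t ht => Or.inl (hx.trans_le ht.1).ne')
    (fun t ht => hasDerivAt_rpow_const (Or.inl (hx.trans ht.1).ne'))
  have hc : 0 < c := hx.trans hxc
  have hmono : (x + 1) ^ (-ν - 1) ≤ c ^ (-ν - 1) :=
    rpow_le_rpow_of_nonpos hc hc1.le (by linarith)
  calc (x + 1) ^ (-ν) - x ^ (-ν) = -ν * c ^ (-ν - 1) := by rw [hslope]; ring
    _ ≤ -ν * (x + 1) ^ (-ν - 1) := mul_le_mul_of_nonpos_left hmono (neg_nonpos.mpr hν)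

lemma rpow_neg_add_one_sub_rpow_neg_mul_le {ν x a C : ℝ} (hν : 0 ≤ ν) (hx : 0 < x)
    (hC : 0 < C) :
    ((x + 1) ^ (-ν) - x ^ (-ν)) * ((x + 1) ^ a / C) ≤ -(ν * (x + 1) ^ (a - ν - 1) / C) := by
  have hpow : (x + 1) ^ (-ν - 1) * (x + 1) ^ a = (x + 1) ^ (a - ν - 1) := by
    rw [← rpow_add (by linarith)]; ring_nf
  calc ((x + 1) ^ (-ν) - x ^ (-ν)) * ((x + 1) ^ a / C)
      ≤ -ν * (x + 1) ^ (-ν - 1) * ((x + 1) ^ a / C) :=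
        mul_le_mul_of_nonneg_right (rpow_neg_add_one_sub_rpow_neg_le hν hx) (by positivity)
    _ = -(ν * (x + 1) ^ (a - ν - 1) / C) := by rw [← hpow]; ring

lemma rpow_neg_sub_one_sub_rpow_neg_le_one {ν x : ℝ} (hν : 0 ≤ ν) (hx : 2 ≤ x) :
    (x - 1) ^ (-ν) - x ^ (-ν) ≤ 1 := by
  have h₁ : (x - 1) ^ (-ν) ≤ 1 := rpow_le_one_of_one_le_of_nonpos (by linarith) (by linarith)
  have h₂ : 0 ≤ x ^ (-ν) := rpow_nonneg (by linarith) _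
  linarith

lemma one_sub_rpow_neg_mul_le {ν x b K : ℝ} (hν : 0 ≤ ν) (hx : 1 ≤ x) (hb : 0 ≤ b)
    (hK : 0 ≤ K) :
    (1 - x ^ (-ν)) * (K / (x + 1) ^ b + 1) ≤ K + 1 := by
  have h₀ : 0 ≤ 1 - x ^ (-ν) :=
    sub_nonneg.mpr (rpow_le_one_of_one_le_of_nonpos hx (by linarith))
  have h₁ : 1 - x ^ (-ν) ≤ 1 := sub_le_self _ (rpow_nonneg (by linarith) _)
  have h₂ : K / (x + 1) ^ b ≤ K := div_le_self hK (one_le_rpow (by linarith) hb)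
  calc (1 - x ^ (-ν)) * (K / (x + 1) ^ b + 1) ≤ 1 * (K + 1) :=
        mul_le_mul h₁ (by linarith) (by positivity) zero_le_one
    _ = K + 1 := one_mul _

lemma tendsto_const_sub_mul_rpow_div_atBot {ν α C : ℝ} (B : ℝ) (hν : 0 < ν) (hα : 0 < α)
    (hC : 0 < C) :
    Tendsto (fun x : ℕ => B - ν * ((x : ℝ) + 1) ^ α / C) atTop atBot := by
  refine tendsto_atBot_add_const_left _ B (tendsto_neg_atTop_atBot.comp ?_)
  refine ((tendsto_rpow_atTop hα).comp ?_).const_mul_atTop hν |>.atTop_div_const hC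
  exact tendsto_atTop_add_const_right _ _ tendsto_natCast_atTop_atTop

theorem stmt_15_general (lam1 lam2 ν : ℝ) (m : ℕ) (h2 : 0 < lam2)
    (hν0 : 0 < ν) (hν : ν < lam1 - 1) :
    ∃ ε : ℝ, 0 < ε ∧ ∃ N : ℕ, ∀ x : ℕ, N ≤ x →
      (((x : ℝ) + 1) ^ (-ν) - (x : ℝ) ^ (-ν)) * (((x : ℝ) + 1) ^ lam1 / ((m : ℝ) + 1) ^ lam2)
        + (((x : ℝ) - 1) ^ (-ν) - (x : ℝ) ^ (-ν))
        + (1 - (x : ℝ) ^ (-ν)) * (((m : ℝ) + 1) ^ lam1 / ((x : ℝ) + 1) ^ lam2 + 1)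
      ≤ -ε := by
  set C := ((m : ℝ) + 1) ^ lam2
  set K := ((m : ℝ) + 1) ^ lam1
  have hC : 0 < C := by positivity
  have hK : 0 < K := by positivity
  obtain ⟨N, hN⟩ := eventually_atTop.mp <|
    (tendsto_const_sub_mul_rpow_div_atBot (K + 2) hν0 (by linarith : 0 < lam1 - ν - 1)
      hC).eventually_le_atBot (-1)
  refine ⟨1, one_pos, max N 2, fun x hx => ?_⟩
  have hx2 : (2 : ℝ) ≤ x := by exact_mod_cast (le_max_right N 2).trans hx
  have hlarge := hN x ((le_max_left N 2).trans hx)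
  have hfirst :=
    rpow_neg_add_one_sub_rpow_neg_mul_le (a := lam1) hν0.le (by linarith : (0 : ℝ) < x) hC
  have hsecond := rpow_neg_sub_one_sub_rpow_neg_le_one hν0.le hx2
  have hthird := one_sub_rpow_neg_mul_le hν0.le (by linarith : (1 : ℝ) ≤ x) h2.le hK.le
  linarith

/-- Drift inequality `Lf(x,m) ≤ −ε` in Part 2 of Theorem 3: for `λ₁ > 1`, `λ₂ > 0`, an
integer `m ≥ 0` and `0 < ν < λ₁ − 1`, there are `ε > 0` and `N` such that for all integers
`x ≥ N` the stated combination is `≤ −ε`. -/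
theorem stmt_15 (lam1 lam2 ν : ℝ) (m : ℕ) (h1 : 1 < lam1) (h2 : 0 < lam2)
    (hν0 : 0 < ν) (hν : ν < lam1 - 1) :
    ∃ ε : ℝ, 0 < ε ∧ ∃ N : ℕ, ∀ x : ℕ, N ≤ x →
      (((x : ℝ) + 1) ^ (-ν) - (x : ℝ) ^ (-ν)) * (((x : ℝ) + 1) ^ lam1 / ((m : ℝ) + 1) ^ lam2)
        + (((x : ℝ) - 1) ^ (-ν) - (x : ℝ) ^ (-ν))
        + (1 - (x : ℝ) ^ (-ν)) * (((m : ℝ) + 1) ^ lam1 / ((x : ℝ) + 1) ^ lam2 + 1)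
      ≤ -ε :=
  stmt_15_general lam1 lam2 ν m h2 hν0 hν
end
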